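/- arXiv:2409.12195 — 2 statements merged into one kernel-verified Lean document; each statement's English description precedes it below -/
import Mathlib

section
/- Let I be a finite set of d features, let 1 ≤ d̃ ≤ d, and let s be a real-valued score function on the size-d̃ subsets of I, where each feature f contained in a subset σ is assigned the score s_σ(f) = s(σ). Define the inclusion value of a feature f at dimension d̃ as IV_{d̃}(f) = (∑_{σ ⊆ I, |σ| = d̃, f ∈ σ} s(σ)) / C(d−1, d̃−1). Suppose the monotonicity assumption holds: there exists a subset Ω of I with |Ω| = d̃ such that for all size-d̃ subsets F, F' of I, if F ∩ Ω ⊆ F' ∩ Ω then s(F) ≤ s(F'). Then every feature in Ω has inclusion value at least as large as every feature outside Ω: for all f ∈ Ω and g ∈ I \ Ω, IV_{d̃}(g) ≤ IV_{d̃}(f). -/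
open Finset

/-- The inclusion value of a feature `f` at dimension `dt` (playing the role of `d̃`):
the sum of the scores `s σ` over all size-`dt` subsets `σ` of the feature set containing
`f`, divided by the binomial coefficient `C(d-1, dt-1)`. -/
noncomputable def inclusionValue {I : Type*} [Fintype I] [DecidableEq I]
    (d dt : ℕ) (s : Finset I → ℝ) (f : I) : ℝ :=
  (∑ σ ∈ (Finset.univ.powersetCard dt).filter (fun σ => f ∈ σ), s σ) /
    ((d - 1).choose (dt - 1))

/-! Applying the transposition `(f g)` to a size-`dt` subset containing `g ∉ Ω` gives a size-`dt`
subset containing `f` and loses no element of `Ω`, so by monotonicity it does not lower the score.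
As the transposition is a bijection between the size-`dt` subsets containing `g` and those
containing `f`, the numerator of `IV(g)` is at most that of `IV(f)`, and the common denominator
is nonnegative. -/

namespace Finset

variable {α : Type*} [DecidableEq α]

theorem mem_finsetCongr_swap {a b x : α} {σ : Finset α} :
    x ∈ (Equiv.swap a b).finsetCongr σ ↔ Equiv.swap a b x ∈ σ := by
  simp [Equiv.finsetCongr_apply, mem_map_equiv, Equiv.symm_swap]

theorem inter_subset_finsetCongr_swap_inter {Ω σ : Finset α} {a b : α} (hb : b ∉ Ω)
    (hbσ : b ∈ σ) : σ ∩ Ω ⊆ (Equiv.swap a b).finsetCongr σ ∩ Ω := by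
  intro x hx
  obtain ⟨hxσ, hxΩ⟩ := mem_inter.1 hx
  have hxb : x ≠ b := ne_of_mem_of_not_mem hxΩ hb
  refine mem_inter.2 ⟨mem_finsetCongr_swap.2 ?_, hxΩ⟩
  by_cases hxa : x = a
  · rwa [hxa, Equiv.swap_apply_left]
  · rwa [Equiv.swap_apply_of_ne_of_ne hxa hxb]

theorem sum_powersetCard_filter_mem_le_of_swap [Fintype α] {β : Type*} [AddCommMonoid β]
    [PartialOrder β] [IsOrderedAddMonoid β] {k : ℕ} {s : Finset α → β} {a b : α}
    (h : ∀ σ : Finset α, σ.card = k → b ∈ σ → s σ ≤ s ((Equiv.swap a b).finsetCongr σ)) :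
    ∑ σ ∈ (univ.powersetCard k).filter (fun σ => b ∈ σ), s σ ≤
      ∑ σ ∈ (univ.powersetCard k).filter (fun σ => a ∈ σ), s σ := by
  calc ∑ σ ∈ (univ.powersetCard k).filter (fun σ => b ∈ σ), s σ
      ≤ ∑ σ ∈ (univ.powersetCard k).filter (fun σ => b ∈ σ),
          s ((Equiv.swap a b).finsetCongr σ) :=
        sum_le_sum fun σ hσ => by
          rw [mem_filter, mem_powersetCard] at hσ
          exact h σ hσ.1.2 hσ.2
    _ = ∑ σ ∈ (univ.powersetCard k).filter (fun σ => a ∈ σ), s σ :=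
        sum_equiv _ (fun σ => by simp [Equiv.finsetCongr_apply]) (fun _ _ => rfl)

end Finset

theorem ivfs_optimality_inclusionValue_general {I : Type*} [Fintype I] [DecidableEq I]
    (d dt : ℕ)
    (s : Finset I → ℝ) (Ω : Finset I)
    (hmono : ∀ F F' : Finset I, F.card = dt → F'.card = dt →
      F ∩ Ω ⊆ F' ∩ Ω → s F ≤ s F') :
    ∀ f ∈ Ω, ∀ g ∉ Ω, inclusionValue d dt s g ≤ inclusionValue d dt s f := by
  intro f _ g hg
  refine div_le_div_of_nonneg_right ?_ (Nat.cast_nonneg _)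
  refine sum_powersetCard_filter_mem_le_of_swap fun σ hσ hgσ => hmono _ _ hσ ?_ ?_
  · rw [Equiv.finsetCongr_apply, card_map, hσ]
  · exact inter_subset_finsetCongr_swap_inter hg hgσ

/-- **Theorem 4 (Optimality), second conclusion.** Under the monotonicity assumption with
witness `Ω`, every feature in `Ω` has inclusion value at least as large as every feature
outside `Ω`; i.e. `Ω` is the set of `dt` features with the highest inclusion value. -/
theorem ivfs_optimality_inclusionValue {I : Type*} [Fintype I] [DecidableEq I]
    (d dt : ℕ) (hd : Fintype.card I = d) (hdt1 : 1 ≤ dt) (hdt2 : dt ≤ d)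
    (s : Finset I → ℝ) (Ω : Finset I) (hΩ : Ω.card = dt)
    (hmono : ∀ F F' : Finset I, F.card = dt → F'.card = dt →
      F ∩ Ω ⊆ F' ∩ Ω → s F ≤ s F') :
    ∀ f ∈ Ω, ∀ g ∉ Ω, inclusionValue d dt s g ≤ inclusionValue d dt s f :=
  ivfs_optimality_inclusionValue_general d dt s Ω hmono
end

section
/- Let I be a finite set, let s be a real-valued function on the size-d̃ subsets of I, and suppose the monotonicity assumption holds with witness Ω ⊆ I, |Ω| = d̃: for all size-d̃ subsets F, F' of I, F ∩ Ω ⊆ F' ∩ Ω implies s(F) ≤ s(F'). Then for any f ∈ Ω and g ∉ Ω, the sum of s(σ) over all size-d̃ subsets σ of I containing g is at most the sum of s(σ) over all size-d̃ subsets σ of I containing f: ∑_{σ : |σ|=d̃, g∈σ} s(σ) ≤ ∑_{σ : |σ|=d̃, f∈σ} s(σ). -/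
open Finset

/-!
Swapping `f` and `g` maps the size-`dt` sets containing `g` bijectively onto those containing
`f`, and since `g ∉ Ω` the swap can only enlarge the trace `σ ∩ Ω` of a set containing `g`;
monotonicity then compares the two sums term by term.
-/

namespace Finset

variable {α : Type*} [DecidableEq α]

theorem inter_subset_map_swap_inter {σ Ω : Finset α} {f g : α} (hg : g ∈ σ) (hgΩ : g ∉ Ω) :
    σ ∩ Ω ⊆ σ.map (Equiv.swap f g).toEmbedding ∩ Ω := by
  intro x hx
  obtain ⟨hxσ, hxΩ⟩ := mem_inter.1 hx
  refine mem_inter.2 ⟨mem_map_equiv.2 ?_, hxΩ⟩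
  rw [Equiv.symm_swap]
  rcases eq_or_ne x f with rfl | hxf
  · rwa [Equiv.swap_apply_left]
  · rwa [Equiv.swap_apply_of_ne_of_ne hxf (ne_of_mem_of_not_mem hxΩ hgΩ)]

theorem sum_powersetCard_filter_mem_map_equiv [Fintype α] {M : Type*} [AddCommMonoid M]
    (e : α ≃ α) (k : ℕ) (a : α) (h : Finset α → M) :
    ∑ σ ∈ (univ.powersetCard k).filter (a ∈ ·), h (σ.map e.toEmbedding) =
      ∑ τ ∈ (univ.powersetCard k).filter (e a ∈ ·), h τ :=
  sum_equiv e.finsetCongr (by simp) (by simp)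

end Finset

theorem ivfs_sum_inequality_general {I : Type*} [Fintype I] [DecidableEq I]
    (dt : ℕ) (s : Finset I → ℝ) (Ω : Finset I)
    (hmono : ∀ F F' : Finset I, F.card = dt → F'.card = dt →
      F ∩ Ω ⊆ F' ∩ Ω → s F ≤ s F')
    (f g : I) (hg : g ∉ Ω) :
    ∑ σ ∈ (Finset.univ.powersetCard dt).filter (fun σ => g ∈ σ), s σ ≤
      ∑ σ ∈ (Finset.univ.powersetCard dt).filter (fun σ => f ∈ σ), s σ := by
  set e := Equiv.swap f g
  calc ∑ σ ∈ (univ.powersetCard dt).filter (fun σ => g ∈ σ), s σ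
      ≤ ∑ σ ∈ (univ.powersetCard dt).filter (fun σ => g ∈ σ), s (σ.map e.toEmbedding) := by
        refine sum_le_sum fun σ hσ => ?_
        obtain ⟨hσcard, hgσ⟩ := mem_filter.1 hσ
        rw [mem_powersetCard_univ] at hσcard
        exact hmono _ _ hσcard (by rwa [card_map]) (inter_subset_map_swap_inter hgσ hg)
    _ = ∑ τ ∈ (univ.powersetCard dt).filter (fun τ => f ∈ τ), s τ := by
        rw [sum_powersetCard_filter_mem_map_equiv, Equiv.swap_apply_right]

/-- **Unnormalized inclusion-value comparison** (Theorem 4). Under the monotonicity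
assumption with witness `Ω` of cardinality `dt` (playing the role of `d̃`), for any
`f ∈ Ω` and `g ∉ Ω`, the sum of `s σ` over all size-`dt` subsets `σ` containing `g`
is at most the sum of `s σ` over all size-`dt` subsets `σ` containing `f`. -/
theorem ivfs_sum_inequality {I : Type*} [Fintype I] [DecidableEq I]
    (dt : ℕ) (s : Finset I → ℝ) (Ω : Finset I) (hΩ : Ω.card = dt)
    (hmono : ∀ F F' : Finset I, F.card = dt → F'.card = dt →
      F ∩ Ω ⊆ F' ∩ Ω → s F ≤ s F')
    (f g : I) (hf : f ∈ Ω) (hg : g ∉ Ω) :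
    ∑ σ ∈ (Finset.univ.powersetCard dt).filter (fun σ => g ∈ σ), s σ ≤
      ∑ σ ∈ (Finset.univ.powersetCard dt).filter (fun σ => f ∈ σ), s σ :=
  ivfs_sum_inequality_general dt s Ω hmono f g hg
end
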